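/- Let p, q be primes, n ≥ 2 and c ≥ 1. Then H_{p,c} is a retract of G_{V,p,c}: there exist group homomorphisms ι : H_{p,c} → G_{V,p,c} and ρ : G_{V,p,c} → H_{p,c} with ρ ∘ ι equal to the identity on H_{p,c}. In particular |G_{V,p,c}| ≥ |H_{p,c}|. -/

import Mathlib

/-- The commutator `[x, y] = x⁻¹ * y⁻¹ * x * y`. -/
def pComm {G : Type*} [Group G] (x y : G) : G := x⁻¹ * y⁻¹ * x * y

/-- The left-normed higher commutator: `lnComm x [y₁, …, y_m] = [x, y₁, …, y_m]`,
where `[x₁, …, x_m] = [[x₁, …, x_{m-1}], x_m]`. -/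
def lnComm {G : Type*} [Group G] : G → List G → G
  | x, [] => x
  | x, y :: l => lnComm (pComm x y) l

section Lemmas

variable {G : Type*} [Group G] {H : Type*} [Group H]

@[simp] lemma pComm_one_right (x : G) : pComm x 1 = 1 := by simp [pComm]

@[simp] lemma pComm_one_left (y : G) : pComm 1 y = 1 := by simp [pComm]

@[simp] lemma pComm_self (x : G) : pComm x x = 1 := by
  simp [pComm, mul_assoc]

lemma lnComm_one_left : ∀ l : List G, lnComm 1 l = 1
  | [] => rfl
  | y :: l => by rw [lnComm, pComm_one_left]; exact lnComm_one_left l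

lemma lnComm_of_one_mem (x : G) : ∀ l : List G, (1 : G) ∈ l → lnComm x l = 1
  | y :: l, h => by
    rcases List.mem_cons.1 h with h | h
    · rw [lnComm, ← h, pComm_one_right, lnComm_one_left]
    · rw [lnComm]; exact lnComm_of_one_mem _ l h

lemma map_pComm (f : G →* H) (x y : G) : f (pComm x y) = pComm (f x) (f y) := by
  simp [pComm]

lemma map_lnComm (f : G →* H) : ∀ (l : List G) (x : G),
    f (lnComm x l) = lnComm (f x) (l.map f)
  | [], x => rfl
  | y :: l, x => by rw [lnComm, map_lnComm f l, map_pComm, List.map_cons, lnComm]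

lemma lnComm_append_singleton (y : G) :
    ∀ (l : List G) (x : G), lnComm x (l ++ [y]) = pComm (lnComm x l) y
  | [], x => rfl
  | z :: l, x => by rw [List.cons_append, lnComm, lnComm_append_singleton y l, lnComm]

lemma pComm_eq_one_iff_commute {x y : G} : pComm x y = 1 ↔ Commute x y := by
  constructor
  · intro h
    have h2 : y * x * pComm x y = x * y := by rw [pComm]; group
    rw [h, mul_one] at h2
    exact h2.symm
  · intro h
    have := h.eq
    rw [pComm, mul_assoc, mul_assoc, this]
    group

lemma pComm_pow_central (u y : G) (hz : ∀ g : G, Commute (pComm u y) g) (k : ℕ) :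
    pComm u y ^ k = u⁻¹ * (y ^ k)⁻¹ * u * y ^ k := by
  induction k with
  | zero => simp
  | succ k ih =>
    have h1 : (y ^ k)⁻¹ * u * y ^ k = u * pComm u y ^ k := by rw [ih]; group
    have h2 : pComm u y ^ k * y = y * pComm u y ^ k := ((hz y).pow_left k).eq
    symm
    calc u⁻¹ * (y ^ (k + 1))⁻¹ * u * y ^ (k + 1)
        = u⁻¹ * y⁻¹ * ((y ^ k)⁻¹ * u * y ^ k) * y := by rw [pow_succ]; group
      _ = u⁻¹ * y⁻¹ * (u * pComm u y ^ k) * y := by rw [h1]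
      _ = u⁻¹ * y⁻¹ * u * (pComm u y ^ k * y) := by group
      _ = u⁻¹ * y⁻¹ * u * (y * pComm u y ^ k) := by rw [h2]
      _ = pComm u y * pComm u y ^ k := by rw [pComm]; group
      _ = pComm u y ^ (k + 1) := (pow_succ' _ _).symm

lemma pComm_pow_eq_one (u y : G) (hz : ∀ g : G, Commute (pComm u y) g) {p : ℕ}
    (hy : y ^ p = 1) : pComm u y ^ p = 1 := by
  rw [pComm_pow_central u y hz, hy]
  group

end Lemmas

open scoped Pointwise

section Finiteness

variable {G : Type*} [Group G]

lemma finite_closure_central (p : ℕ) (hp : 0 < p) (T : Finset G) :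
    (∀ t ∈ T, ∀ g : G, Commute t g) → (∀ t ∈ T, t ^ p = 1) →
    (Subgroup.closure (T : Set G) : Set G).Finite := by
  classical
  induction T using Finset.induction_on with
  | empty => intro _ _; simp
  | @insert a s ha ih =>
    intro hcomm hpow
    have hle : Subgroup.closure (s : Set G) ≤ Subgroup.center G := by
      refine (Subgroup.closure_le _).2 fun t ht => Subgroup.mem_center_iff.2 fun g => ?_
      exact ((hcomm t (Finset.mem_insert_of_mem ht)) g).symm.eq
    haveI : (Subgroup.closure (s : Set G)).Normal := by
      constructor
      intro x hx g
      have h := Subgroup.mem_center_iff.1 (hle hx) g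
      have h2 : g * x * g⁻¹ = x := by rw [h]; group
      rwa [h2]
    have hfin1 : (Subgroup.zpowers a : Set G).Finite := by
      refine IsOfFinOrder.finite_zpowers ?_
      exact isOfFinOrder_iff_pow_eq_one.2 ⟨p, hp, hpow a (Finset.mem_insert_self a s)⟩
    have hfin2 := ih (fun t ht => hcomm t (Finset.mem_insert_of_mem ht))
      (fun t ht => hpow t (Finset.mem_insert_of_mem ht))
    have key : (Subgroup.closure (↑(insert a s) : Set G) : Set G)
        = (Subgroup.zpowers a : Set G) * (Subgroup.closure (s : Set G) : Set G) := by
      rw [Finset.coe_insert, Set.insert_eq, Subgroup.closure_union,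
        ← Subgroup.zpowers_eq_closure, Subgroup.mul_normal]
    rw [key]
    exact hfin1.mul hfin2

lemma lnComm_set_finite (S : Set G) (hfin : S.Finite) (c : ℕ) :
    {x : G | ∃ s ∈ S, ∃ l : List G, l.length = c ∧ (∀ y ∈ l, y ∈ S) ∧ x = lnComm s l}.Finite := by
  haveI : Finite ↥S := hfin.to_subtype
  have hsub : {x : G | ∃ s ∈ S, ∃ l : List G, l.length = c ∧ (∀ y ∈ l, y ∈ S) ∧ x = lnComm s l}
      ⊆ Set.range (fun z : ↥S × (Fin c → ↥S) =>
        lnComm (z.1 : G) ((List.ofFn z.2).map (fun y : ↥S => (y : G)))) := by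
    rintro x ⟨s, hs, l, hlen, hmem, rfl⟩
    subst hlen
    refine ⟨(⟨s, hs⟩, fun i => ⟨l.get i, hmem _ (l.get_mem i)⟩), ?_⟩
    show lnComm s _ = lnComm s l
    congr 1
    rw [List.map_ofFn]
    exact List.ofFn_get l
  exact (Set.finite_range _).subset hsub

lemma exists_list_preimage {α β : Type*} (f : α → β) (S : Set α) :
    ∀ l' : List β, (∀ x ∈ l', x ∈ f '' S) →
      ∃ l : List α, (∀ y ∈ l, y ∈ S) ∧ l' = l.map f
  | [], _ => ⟨[], by simp, rfl⟩
  | x :: l', h => by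
    obtain ⟨a, ha, rfl⟩ := h x List.mem_cons_self
    obtain ⟨l, hl, rfl⟩ := exists_list_preimage f S l' (fun y hy => h y (List.mem_cons_of_mem _ hy))
    refine ⟨a :: l, fun y hy => ?_, rfl⟩
    rcases List.mem_cons.1 hy with rfl | hy
    · exact ha
    · exact hl y hy

end Finiteness

universe u

lemma finite_of_rel (p : ℕ) (hp : 0 < p) :
    ∀ (c : ℕ) (G : Type u) [Group G] (S : Set G), S.Finite →
      Subgroup.closure S = ⊤ →
      (∀ s ∈ S, s ^ p = 1) →
      (∀ s ∈ S, ∀ l : List G, l.length = c → (∀ x ∈ l, x ∈ S) → lnComm s l = 1) →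
      Finite G := by
  intro c
  induction c with
  | zero =>
    intro G _ S hfin hgen hpow hcomm
    have h1 : ∀ s ∈ S, s = 1 := fun s hs => by
      simpa [lnComm] using hcomm s hs [] rfl (by simp)
    have hbot : (⊤ : Subgroup G) ≤ ⊥ := by
      rw [← hgen]
      exact (Subgroup.closure_le ⊥).2 fun s hs => Subgroup.mem_bot.2 (h1 s hs)
    haveI : Subsingleton G :=
      ⟨fun a b => by
        rw [Subgroup.mem_bot.1 (hbot (Subgroup.mem_top a)),
          Subgroup.mem_bot.1 (hbot (Subgroup.mem_top b))]⟩
    exact Finite.of_subsingleton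
  | succ c ih =>
    intro G _ S hfin hgen hpow hcomm
    classical
    have hTcen : ∀ t ∈ {x : G | ∃ s ∈ S, ∃ l : List G,
        l.length = c ∧ (∀ y ∈ l, y ∈ S) ∧ x = lnComm s l}, ∀ g : G, Commute t g := by
      rintro t ⟨s, hs, l, hlen, hmem, rfl⟩ g
      have hcent : ∀ x ∈ S, Commute (lnComm s l) x := by
        intro x hx
        have h := hcomm s hs (l ++ [x]) (by simp [hlen]) ?_
        · rw [lnComm_append_singleton] at h
          exact pComm_eq_one_iff_commute.1 h
        · intro y hy
          rcases List.mem_append.1 hy with hy | hy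
          · exact hmem y hy
          · rw [List.mem_singleton.1 hy]; exact hx
      have hle : S ⊆ (Subgroup.centralizer {lnComm s l} : Set G) := fun x hx =>
        Subgroup.mem_centralizer_iff.2 fun h hh => by
          rw [Set.mem_singleton_iff.1 hh]
          exact (hcent x hx).eq
      have hmem' : g ∈ Subgroup.centralizer {lnComm s l} := by
        have hcl := (Subgroup.closure_le _).2 hle
        rw [hgen] at hcl
        exact hcl (Subgroup.mem_top g)
      exact Subgroup.mem_centralizer_iff.1 hmem' (lnComm s l) rfl
    have hTpow : ∀ t ∈ {x : G | ∃ s ∈ S, ∃ l : List G,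
        l.length = c ∧ (∀ y ∈ l, y ∈ S) ∧ x = lnComm s l}, t ^ p = 1 := by
      rintro t ⟨s, hs, l, hlen, hmem, rfl⟩
      rcases l.eq_nil_or_concat' with rfl | ⟨l', y, rfl⟩
      · simpa [lnComm] using hpow s hs
      · rw [lnComm_append_singleton]
        refine pComm_pow_eq_one _ _ ?_ (hpow y (hmem y (by simp)))
        intro g
        rw [← lnComm_append_singleton]
        exact hTcen _ ⟨s, hs, l' ++ [y], hlen, hmem, rfl⟩ g
    have hTfin := lnComm_set_finite S hfin c
    set Z := Subgroup.closure {x : G | ∃ s ∈ S, ∃ l : List G,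
        l.length = c ∧ (∀ y ∈ l, y ∈ S) ∧ x = lnComm s l} with hZ
    have hZfin : (Z : Set G).Finite := by
      have h := finite_closure_central p hp hTfin.toFinset
        (fun t ht g => hTcen t (hTfin.mem_toFinset.1 ht) g)
        (fun t ht => hTpow t (hTfin.mem_toFinset.1 ht))
      rwa [hTfin.coe_toFinset] at h
    haveI : Finite ↥Z := hZfin.to_subtype
    have hZle : Z ≤ Subgroup.center G := (Subgroup.closure_le _).2 fun t ht =>
      Subgroup.mem_center_iff.2 fun g => (hTcen t ht g).symm.eq
    haveI : Z.Normal := by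
      constructor
      intro x hx g
      have h := Subgroup.mem_center_iff.1 (hZle hx) g
      have h2 : g * x * g⁻¹ = x := by rw [h]; group
      rwa [h2]
    haveI hfinQ : Finite (G ⧸ Z) := by
      refine ih (G ⧸ Z) ((QuotientGroup.mk' Z) '' S) (hfin.image _) ?_ ?_ ?_
      · rw [← MonoidHom.map_closure, hgen,
          Subgroup.map_top_of_surjective _ (QuotientGroup.mk'_surjective Z)]
      · rintro s' ⟨s, hs, rfl⟩
        rw [← map_pow, hpow s hs, map_one]
      · rintro s' ⟨s, hs, rfl⟩ l' hlen' hmem'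
        obtain ⟨l, hlS, rfl⟩ := exists_list_preimage _ S l' hmem'
        rw [List.length_map] at hlen'
        rw [← map_lnComm]
        have hmemZ : lnComm s l ∈ Z :=
          Subgroup.subset_closure ⟨s, hs, l, hlen', hlS, rfl⟩
        rw [← QuotientGroup.ker_mk' Z] at hmemZ
        exact MonoidHom.mem_ker.1 hmemZ
    exact Finite.of_equiv _ (Subgroup.groupEquivQuotientProdSubgroup (s := Z)).symm

lemma list_eq_ofFn {α : Type*} : ∀ (l : List α) (c : ℕ), l.length = c →
    ∃ t : Fin c → α, l = List.ofFn t := fun l c h => by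
  subst h; exact ⟨l.get, (List.ofFn_get l).symm⟩


/-- The relations of the presented group `H_{p,c}`. -/
def Hrels (p c : ℕ) : Set (FreeGroup (Fin 2)) :=
  {w | (∃ i : Fin 2, w = FreeGroup.of i ^ p) ∨
       (∃ (i : Fin 2) (t : Fin c → Fin 2),
          w = lnComm (FreeGroup.of i) ((List.ofFn t).map FreeGroup.of))}

/-- The group `H_{p,c}` presented by two generators `a₁, a₂` with relations
`a₁^p = a₂^p = 1` and `[a_{i₀}, a_{i₁}, …, a_{i_c}] = 1` for all tuples
`(i₀, …, i_c) ∈ {1,2}^{c+1}`. -/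
abbrev Hgroup (p c : ℕ) : Type := PresentedGroup (Hrels p c)

/-- The relations of the presented group `G_{V,p,c}`, where `V = (ZMod q)^n`:
every generator `v ∈ V` satisfies `v^p = 1`, every left-normed commutator of
`c + 1` generators is trivial, and `[v, w] = 1` whenever
`v - w ∈ V₁ ∪ ⋯ ∪ V_n`, i.e. whenever `v` and `w` agree in some coordinate. -/
def Grels (p q c n : ℕ) : Set (FreeGroup (Fin n → ZMod q)) :=
  {g | (∃ v : Fin n → ZMod q, g = FreeGroup.of v ^ p) ∨
       (∃ (v : Fin n → ZMod q) (t : Fin c → (Fin n → ZMod q)),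
          g = lnComm (FreeGroup.of v) ((List.ofFn t).map FreeGroup.of)) ∨
       (∃ v w : Fin n → ZMod q, (∃ i : Fin n, (v - w) i = 0) ∧
          g = pComm (FreeGroup.of v) (FreeGroup.of w))}

/-- The group `G_{V,p,c}` presented with the vector space `V = (ZMod q)^n` as
set of generators, subject to the relations `Grels p q c n`. -/
abbrev Ggroup (p q c n : ℕ) : Type := PresentedGroup (Grels p q c n)

section Rels

variable {p q c n : ℕ}

lemma Hrel_one {r : FreeGroup (Fin 2)} (hr : r ∈ Hrels p c) :
    PresentedGroup.mk (Hrels p c) r = 1 :=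
  (QuotientGroup.eq_one_iff r).2 (Subgroup.subset_normalClosure hr)

lemma Grel_one {r : FreeGroup (Fin n → ZMod q)} (hr : r ∈ Grels p q c n) :
    PresentedGroup.mk (Grels p q c n) r = 1 :=
  (QuotientGroup.eq_one_iff r).2 (Subgroup.subset_normalClosure hr)

lemma Hpow (i : Fin 2) : (PresentedGroup.of i : Hgroup p c) ^ p = 1 := by
  show (PresentedGroup.mk (Hrels p c) (FreeGroup.of i)) ^ p = 1
  rw [← map_pow]
  exact Hrel_one (Or.inl ⟨i, rfl⟩)

lemma HlnComm (i : Fin 2) (t : Fin c → Fin 2) :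
    lnComm (PresentedGroup.of i : Hgroup p c) ((List.ofFn t).map PresentedGroup.of) = 1 := by
  have h1 : (List.ofFn t).map (PresentedGroup.of (rels := Hrels p c)) =
      ((List.ofFn t).map FreeGroup.of).map (PresentedGroup.mk (Hrels p c)) := by
    rw [List.map_map]; rfl
  rw [h1]
  show lnComm (PresentedGroup.mk (Hrels p c) (FreeGroup.of i)) _ = 1
  rw [← map_lnComm]
  exact Hrel_one (Or.inr ⟨i, t, rfl⟩)

lemma Gpow (v : Fin n → ZMod q) : (PresentedGroup.of v : Ggroup p q c n) ^ p = 1 := by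
  show (PresentedGroup.mk (Grels p q c n) (FreeGroup.of v)) ^ p = 1
  rw [← map_pow]
  exact Grel_one (Or.inl ⟨v, rfl⟩)

lemma GlnComm (v : Fin n → ZMod q) (t : Fin c → (Fin n → ZMod q)) :
    lnComm (PresentedGroup.of v : Ggroup p q c n) ((List.ofFn t).map PresentedGroup.of) = 1 := by
  have h1 : (List.ofFn t).map (PresentedGroup.of (rels := Grels p q c n)) =
      ((List.ofFn t).map FreeGroup.of).map (PresentedGroup.mk (Grels p q c n)) := by
    rw [List.map_map]; rfl
  rw [h1]
  show lnComm (PresentedGroup.mk (Grels p q c n) (FreeGroup.of v)) _ = 1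
  rw [← map_lnComm]
  exact Grel_one (Or.inr (Or.inl ⟨v, t, rfl⟩))

lemma GpComm (v w : Fin n → ZMod q) (h : ∃ i : Fin n, (v - w) i = 0) :
    pComm (PresentedGroup.of v : Ggroup p q c n) (PresentedGroup.of w) = 1 := by
  show pComm (PresentedGroup.mk (Grels p q c n) (FreeGroup.of v))
    (PresentedGroup.mk (Grels p q c n) (FreeGroup.of w)) = 1
  rw [← map_pComm]
  exact Grel_one (Or.inr (Or.inr ⟨v, w, h, rfl⟩))

end Rels


/-- For primes `p, q`, `n ≥ 2` and `c ≥ 1`, the group `H_{p,c}` is a retract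
of `G_{V,p,c}`: there are homomorphisms `ι : H_{p,c} → G_{V,p,c}` and
`ρ : G_{V,p,c} → H_{p,c}` with `ρ ∘ ι = id`.  In particular
`|G_{V,p,c}| ≥ |H_{p,c}|`. -/
theorem stmt_8 (p q : ℕ) (hp : p.Prime) (hq : q.Prime) (n c : ℕ)
    (hn : 2 ≤ n) (hc : 1 ≤ c) :
    (∃ (ι : Hgroup p c →* Ggroup p q c n) (ρ : Ggroup p q c n →* Hgroup p c),
      ρ.comp ι = MonoidHom.id (Hgroup p c)) ∧
    Nat.card (Hgroup p c) ≤ Nat.card (Ggroup p q c n) := by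
  haveI : NeZero q := ⟨hq.pos.ne'⟩
  haveI : Fact (1 < q) := ⟨hq.one_lt⟩
  have hn0 : 0 < n := by omega
  -- the two distinguished generators
  set vf : Fin 2 → (Fin n → ZMod q) := fun i _ => (i.val : ZMod q) with hvf
  have hvf01 : ∀ i : Fin n, (vf 0 - vf 1) i ≠ 0 := by
    intro i h
    rw [Pi.sub_apply, sub_eq_zero] at h
    simp [hvf] at h
  have hvfne : vf 1 ≠ vf 0 := by
    intro h
    exact hvf01 ⟨0, hn0⟩ (by rw [h]; simp)
  -- ι
  have hι : ∀ r ∈ Hrels p c,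
      FreeGroup.lift (fun i => (PresentedGroup.of (vf i) : Ggroup p q c n)) r = 1 := by
    intro r hr
    rcases hr with ⟨i, rfl⟩ | ⟨i, t, rfl⟩
    · rw [map_pow, FreeGroup.lift_apply_of]
      exact Gpow (vf i)
    · rw [map_lnComm, FreeGroup.lift_apply_of, List.map_map]
      have h1 : (⇑(FreeGroup.lift (fun i => (PresentedGroup.of (vf i) : Ggroup p q c n))) ∘
          FreeGroup.of) = fun i => (PresentedGroup.of (vf i) : Ggroup p q c n) := by
        funext x; exact FreeGroup.lift_apply_of
      rw [h1, List.map_ofFn]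
      have h2 : ((fun i => (PresentedGroup.of (vf i) : Ggroup p q c n)) ∘ t) =
          fun j => (PresentedGroup.of (vf (t j)) : Ggroup p q c n) := rfl
      rw [h2]
      have h3 : (List.ofFn fun j => (PresentedGroup.of (vf (t j)) : Ggroup p q c n)) =
          (List.ofFn fun j => vf (t j)).map PresentedGroup.of := by
        rw [List.map_ofFn]; rfl
      rw [h3]
      exact GlnComm (vf i) (fun j => vf (t j))
  classical
  -- the retraction data
  set g : (Fin n → ZMod q) → Hgroup p c := fun v =>
    if v = vf 0 then PresentedGroup.of 0
    else if v = vf 1 then PresentedGroup.of 1 else 1 with hg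
  have hgval : ∀ v, g v = 1 ∨ ∃ i : Fin 2, g v = PresentedGroup.of i ∧ v = vf i := by
    intro v
    by_cases h0 : v = vf 0
    · exact Or.inr ⟨0, by simp [hg, h0], h0⟩
    by_cases h1 : v = vf 1
    · exact Or.inr ⟨1, by simp [hg, h0, h1, hvfne], h1⟩
    · exact Or.inl (by simp [hg, h0, h1])
  have hρ : ∀ r ∈ Grels p q c n, FreeGroup.lift g r = 1 := by
    intro r hr
    rcases hr with ⟨v, rfl⟩ | ⟨v, t, rfl⟩ | ⟨v, w, hvw, rfl⟩
    · rw [map_pow, FreeGroup.lift_apply_of]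
      rcases hgval v with h | ⟨i, h, _⟩
      · rw [h, one_pow]
      · rw [h]; exact Hpow i
    · rw [map_lnComm, FreeGroup.lift_apply_of, List.map_map]
      have h1 : (⇑(FreeGroup.lift g) ∘ FreeGroup.of) = g := by
        funext x; exact FreeGroup.lift_apply_of
      rw [h1]
      by_cases hv : g v = 1
      · rw [hv]; exact lnComm_one_left _
      by_cases ht : ∃ j, g (t j) = 1
      · obtain ⟨j, hj⟩ := ht
        refine lnComm_of_one_mem _ _ ?_
        rw [← hj]
        exact List.mem_map_of_mem (f := g) ((List.mem_ofFn (f := t)).2 ⟨j, rfl⟩)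
      · push_neg at ht
        obtain ⟨i, hi, _⟩ := (hgval v).resolve_left hv
        have he : ∀ j, ∃ e : Fin 2, g (t j) = PresentedGroup.of e :=
          fun j => ((hgval (t j)).resolve_left (ht j)).imp (fun e h => h.1)
        choose e hee using he
        have h2 : (List.ofFn t).map g = (List.ofFn e).map PresentedGroup.of := by
          rw [List.map_ofFn, List.map_ofFn]
          congr 1
          funext j
          exact hee j
        rw [hi, h2]
        exact HlnComm i e
    · rw [map_pComm, FreeGroup.lift_apply_of, FreeGroup.lift_apply_of]
      rcases hgval v with h | ⟨i, hgeq, hveq⟩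
      · rw [h, pComm_one_left]
      rcases hgval w with h | ⟨i', hgeq', hveq'⟩
      · rw [h, pComm_one_right]
      by_cases hii : i = i'
      · rw [hgeq, hgeq', hii, pComm_self]
      · exfalso
        obtain ⟨k, hk⟩ := hvw
        rw [hveq, hveq', Pi.sub_apply, sub_eq_zero] at hk
        have hk0 : vf 0 k = vf 1 k := by
          fin_cases i <;> fin_cases i' <;>
            [exact absurd rfl hii; exact hk; exact hk.symm; exact absurd rfl hii]
        exact hvf01 k (by rw [Pi.sub_apply, hk0, sub_self])
  have hcomp : (PresentedGroup.toGroup hρ).comp (PresentedGroup.toGroup hι) =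
      MonoidHom.id (Hgroup p c) := by
    refine PresentedGroup.ext fun x => ?_
    rw [MonoidHom.comp_apply, PresentedGroup.toGroup.of, PresentedGroup.toGroup.of,
      MonoidHom.id_apply]
    fin_cases x
    · simp [hg]
    · simp [hg, hvfne]
  have hfinG : Finite (Ggroup p q c n) := by
    refine finite_of_rel p hp.pos c (Ggroup p q c n) (Set.range PresentedGroup.of)
      (Set.finite_range _) (PresentedGroup.closure_range_of _) ?_ ?_
    · rintro s ⟨v, rfl⟩; exact Gpow v
    · rintro s ⟨v, rfl⟩ l hlen hmem
      have hmem' : ∀ x ∈ l, x ∈ PresentedGroup.of '' Set.univ := by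
        intro x hx
        obtain ⟨w, hw⟩ := hmem x hx
        exact ⟨w, trivial, hw⟩
      obtain ⟨lf, -, rfl⟩ := exists_list_preimage _ Set.univ l hmem'
      rw [List.length_map] at hlen
      obtain ⟨t, rfl⟩ := list_eq_ofFn lf c hlen
      exact GlnComm v t
  refine ⟨⟨PresentedGroup.toGroup hι, PresentedGroup.toGroup hρ, hcomp⟩, ?_⟩
  have hinj : Function.Injective (PresentedGroup.toGroup hι) :=
    Function.LeftInverse.injective (g := PresentedGroup.toGroup hρ)
      (fun x => by simpa using DFunLike.congr_fun hcomp x)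
  exact Nat.card_le_card_of_injective _ hinj
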